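/- arXiv:1610.06720 — 5 statements merged into one kernel-verified Lean document; each statement's English description precedes it below -/
import Mathlib

section
/- Let (f_n)_{n∈ℕ} be a sequence of orientation-preserving homeomorphisms of ℝ. Then there exist subsets X and Y of ℝ, each of which is the image of the set ⋃_{n∈ℤ}[3n, 3n+1] under some orientation-preserving homeomorphism of ℝ, and for each n a factorization f_n = g_n ∘ h_n ∘ k_n, where k_n has compact support, the support of g_n is contained in X, and the support of h_n is contained in Y. -/
/-!
Choose `c : ℤ → ℝ` increasing to `±∞` so fast that, for every `n` and all but finitely many `l`,
both `f n` and its inverse send `c l` below `c (l + 1)`. Put `X = ⋃ [c (6i), c (6i + 4)]` and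
`Y = ⋃ [c (6i + 3), c (6i + 7)]`: every gap of `X` lies strictly inside a block of `Y` and vice
versa, and both are images of `⋃ [3n, 3n + 1]` under piecewise affine homeomorphisms.

Fix `f = f n`. On each far-out block of `Y`, let `h` agree with `f` on the `f`-preimage of the gap
of `X` inside that block, interpolating affinely to the identity at the ends of the block. Then
`f ∘ h⁻¹` fixes all far-out gaps of `X`, so the map `g` equal to `f ∘ h⁻¹` outside a compact
interval and to the identity inside it is supported in `X`, and `k = h⁻¹ ∘ g⁻¹ ∘ f` has compact
support.
-/

open Set Filter

namespace OrderIso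

variable {α β : Type*} [LinearOrder α] [LinearOrder β]

theorem exists_glue (e₁ e₂ : α ≃o β) {a : α} (h : e₁ a = e₂ a) :
    ∃ e : α ≃o β, (∀ x ≤ a, e x = e₁ x) ∧ ∀ x, a ≤ x → e x = e₂ x := by
  classical
  set φ : α → β := fun x => if x ≤ a then e₁ x else e₂ x
  have hmono : StrictMono φ := by
    intro x y hxy
    simp only [φ]
    split_ifs with hx hy hy
    · exact e₁.strictMono hxy
    · calc e₁ x ≤ e₁ a := e₁.monotone hx
        _ = e₂ a := h
        _ < e₂ y := e₂.strictMono (not_le.1 hy)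
    · exact absurd (hxy.le.trans hy) hx
    · exact e₂.strictMono hxy
  have hsurj : Function.Surjective φ := by
    intro y
    rcases le_or_gt y (e₁ a) with hy | hy
    · exact ⟨e₁.symm y, by simp [φ, e₁.symm_apply_le.2 hy]⟩
    · have : a < e₂.symm y := e₂.lt_symm_apply.2 (h ▸ hy)
      exact ⟨e₂.symm y, by simp [φ, not_le.2 this]⟩
  refine ⟨hmono.orderIsoOfSurjective φ hsurj, fun x hx => by simp [φ, hx], fun x hx => ?_⟩
  rcases hx.eq_or_lt with rfl | hx
  · simp [φ, h]
  · simp [φ, not_le.2 hx]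

theorem exists_eq_self_on_Icc (e : α ≃o α) {q p : α} (hqp : q ≤ p) (hq : e q = q)
    (hp : e p = p) :
    ∃ g : α ≃o α, (∀ x ≤ q, g x = e x) ∧ (∀ x ∈ Icc q p, g x = x) ∧
      ∀ x, p ≤ x → g x = e x := by
  obtain ⟨g₁, hg₁l, hg₁r⟩ := exists_glue (OrderIso.refl α) e hp.symm
  obtain ⟨g, hgl, hgr⟩ := exists_glue e g₁ (by rw [hg₁l q hqp, hq]; rfl)
  refine ⟨g, hgl, fun x hx => ?_, fun x hx => ?_⟩
  · rw [hgr x hx.1, hg₁l x hx.2]; rfl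
  · rw [hgr x (hqp.trans hx), hg₁r x hx]

end OrderIso

theorem exists_orderIso_apply_eq_apply_eq {a b a' b' : ℝ} (hab : a < b) (hab' : a' < b') :
    ∃ e : ℝ ≃o ℝ, e a = a' ∧ e b = b' := by
  have hk : 0 < (b' - a') / (b - a) := div_pos (sub_pos.2 hab') (sub_pos.2 hab)
  refine ⟨(OrderIso.addRight (-a)).trans
    ((OrderIso.mulRight₀ _ hk).trans (OrderIso.addRight a')), by simp, ?_⟩
  simp only [OrderIso.trans_apply, OrderIso.addRight_apply, OrderIso.mulRight₀_apply]
  field_simp [(sub_pos.2 hab).ne']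
  ring

theorem exists_orderIso_apply_eq₃ {a m b a' m' b' : ℝ} (ham : a < m) (hmb : m < b)
    (ham' : a' < m') (hmb' : m' < b') :
    ∃ e : ℝ ≃o ℝ, e a = a' ∧ e m = m' ∧ e b = b' := by
  obtain ⟨ℓ₁, hℓ₁a, hℓ₁m⟩ := exists_orderIso_apply_eq_apply_eq ham ham'
  obtain ⟨ℓ₂, hℓ₂m, hℓ₂b⟩ := exists_orderIso_apply_eq_apply_eq hmb hmb'
  obtain ⟨e, hel, her⟩ := OrderIso.exists_glue ℓ₁ ℓ₂ (hℓ₁m.trans hℓ₂m.symm)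
  exact ⟨e, by rw [hel a ham.le, hℓ₁a], by rw [hel m le_rfl, hℓ₁m],
    by rw [her b hmb.le, hℓ₂b]⟩

theorem exists_orderIso_eqOn_Icc_eq_self_off_Ioo (f : ℝ ≃o ℝ) {a A B b : ℝ} (haA : a < A)
    (hAB : A ≤ B) (hBb : B < b) (hfA : a < f A) (hfB : f B < b) :
    ∃ e : ℝ ≃o ℝ, (∀ x ∉ Ioo a b, e x = x) ∧ EqOn e f (Icc A B) := by
  obtain ⟨ℓ₁, hℓ₁a, hℓ₁A⟩ := exists_orderIso_apply_eq_apply_eq haA hfA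
  obtain ⟨ℓ₂, hℓ₂B, hℓ₂b⟩ := exists_orderIso_apply_eq_apply_eq hBb hfB
  obtain ⟨e₁, he₁l, he₁r⟩ := OrderIso.exists_glue (OrderIso.refl ℝ) ℓ₁ hℓ₁a.symm
  obtain ⟨e₂, he₂l, he₂r⟩ := OrderIso.exists_glue e₁ f (by rw [he₁r A haA.le, hℓ₁A])
  obtain ⟨e₃, he₃l, he₃r⟩ := OrderIso.exists_glue e₂ ℓ₂ (by rw [he₂r B hAB, hℓ₂B])
  obtain ⟨e, hel, her⟩ :=
    OrderIso.exists_glue e₃ (OrderIso.refl ℝ) (by rw [he₃r b hBb.le, hℓ₂b]; rfl)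
  refine ⟨e, fun x hx => ?_, fun x hx => ?_⟩
  · rcases le_or_gt x a with hxa | hax
    · have hxA := hxa.trans haA.le
      rw [hel x (hxA.trans (hAB.trans hBb.le)), he₃l x (hxA.trans hAB), he₂l x hxA, he₁l x hxa]
      rfl
    · rw [her x (not_lt.1 fun hxb => hx ⟨hax, hxb⟩)]
      rfl
  · rw [hel x (hx.2.trans hBb.le), he₃l x hx.2, he₂r x hx.1]

structure IsIntervalPartition (t : ℤ → ℝ) : Prop where
  strictMono : StrictMono t
  tendsto_atTop : Tendsto t atTop atTop
  tendsto_atBot : Tendsto t atBot atBot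

namespace IsIntervalPartition

variable {t : ℤ → ℝ}

theorem comp (ht : IsIntervalPartition t) {τ : ℤ → ℤ} (hτ : StrictMono τ) :
    IsIntervalPartition (fun i => t (τ i)) where
  strictMono := ht.strictMono.comp hτ
  tendsto_atTop := ht.tendsto_atTop.comp <|
    tendsto_atTop_atTop_of_monotone' hτ.monotone hτ.not_bddAbove_range_of_isSuccArchimedean
  tendsto_atBot := ht.tendsto_atBot.comp <|
    tendsto_atBot_atBot_of_monotone' hτ.monotone hτ.not_bddBelow_range_of_isPredArchimedean

theorem exists_mem_Ico (ht : IsIntervalPartition t) (x : ℝ) :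
    ∃ j, x ∈ Ico (t j) (t (j + 1)) := by
  obtain ⟨J, hJ⟩ := (ht.tendsto_atTop.eventually_gt_atTop x).exists
  obtain ⟨j, hj, hmax⟩ := Int.exists_greatest_of_bdd (P := fun j => t j ≤ x)
    ⟨J, fun j hj => (ht.strictMono.lt_iff_lt.1 (hj.trans_lt hJ)).le⟩
    (ht.tendsto_atBot.eventually_le_atBot x).exists
  exact ⟨j, hj, not_le.1 fun h => by linarith [hmax _ h]⟩

theorem eq_of_mem_Ico (ht : IsIntervalPartition t) {i j : ℤ} {x : ℝ}
    (hi : x ∈ Ico (t i) (t (i + 1))) (hj : x ∈ Ico (t j) (t (j + 1))) : i = j := by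
  have h₁ := ht.strictMono.lt_iff_lt.1 (hi.1.trans_lt hj.2)
  have h₂ := ht.strictMono.lt_iff_lt.1 (hj.1.trans_lt hi.2)
  omega

theorem exists_orderIso_eqOn {s : ℤ → ℝ} (hs : IsIntervalPartition s)
    (ht : IsIntervalPartition t) (e : ℤ → ℝ ≃o ℝ) (hleft : ∀ j, e j (s j) = t j)
    (hright : ∀ j, e j (s (j + 1)) = t (j + 1)) :
    ∃ Φ : ℝ ≃o ℝ, ∀ j, EqOn Φ (e j) (Icc (s j) (s (j + 1))) := by
  choose idx hidx using hs.exists_mem_Ico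
  set φ : ℝ → ℝ := fun x => e (idx x) x
  have hφ : ∀ j, ∀ x ∈ Ico (s j) (s (j + 1)), φ x = e j x := fun j x hx => by
    simp only [φ, hs.eq_of_mem_Ico (hidx x) hx]
  have hmaps : ∀ j, ∀ x ∈ Ico (s j) (s (j + 1)), e j x ∈ Ico (t j) (t (j + 1)) :=
    fun j x hx => ⟨hleft j ▸ (e j).monotone hx.1, hright j ▸ (e j).strictMono hx.2⟩
  have hmono : StrictMono φ := by
    intro x y hxy
    rcases lt_trichotomy (idx x) (idx y) with hij | hij | hij
    · calc φ x < t (idx x + 1) := (hmaps _ x (hidx x)).2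
        _ ≤ t (idx y) := ht.strictMono.monotone hij
        _ ≤ φ y := (hmaps _ y (hidx y)).1
    · simp only [φ, hij, (e (idx y)).lt_iff_lt, hxy]
    · have := hs.strictMono.monotone (Int.add_one_le_of_lt hij)
      linarith [(hidx x).1, (hidx y).2]
  have hsurj : Function.Surjective φ := by
    intro y
    obtain ⟨j, hj⟩ := ht.exists_mem_Ico y
    have hx : (e j).symm y ∈ Ico (s j) (s (j + 1)) :=
      ⟨(e j).le_symm_apply.2 (hleft j ▸ hj.1), (e j).symm_apply_lt.2 (hright j ▸ hj.2)⟩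
    exact ⟨_, (hφ j _ hx).trans ((e j).apply_symm_apply y)⟩
  refine ⟨hmono.orderIsoOfSurjective φ hsurj, fun j x hx => ?_⟩
  simp only [StrictMono.coe_orderIsoOfSurjective]
  rcases hx.2.eq_or_lt with rfl | hlt
  · rw [hφ (j + 1) _ ⟨le_rfl, hs.strictMono (lt_add_one _)⟩, hleft, hright]
  · exact hφ j x ⟨hx.1, hlt⟩

theorem compl_iUnion_Icc {a b : ℤ → ℝ} (ha : IsIntervalPartition a) (hab : ∀ i, a i ≤ b i)
    (hba : ∀ i, b i < a (i + 1)) : (⋃ i, Icc (a i) (b i))ᶜ = ⋃ i, Ioo (b i) (a (i + 1)) := by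
  ext x
  simp only [mem_compl_iff, mem_iUnion, mem_Icc, mem_Ioo, not_exists, not_and, not_le]
  constructor
  · intro hx
    obtain ⟨i, hi⟩ := ha.exists_mem_Ico x
    exact ⟨i, hx i hi.1, hi.2⟩
  · rintro ⟨i, hbx, hxa⟩ i' hax
    rcases lt_trichotomy i' i with h | rfl | h
    · calc b i' < a (i' + 1) := hba i'
        _ ≤ a i := ha.strictMono.monotone (Int.add_one_le_of_lt h)
        _ ≤ b i := hab i
        _ < x := hbx
    · exact hbx
    · exact absurd (hxa.trans_le (ha.strictMono.monotone (Int.add_one_le_of_lt h)))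
        (not_lt.2 hax)

theorem isClosed_iUnion_Icc {a b : ℤ → ℝ} (ha : IsIntervalPartition a) (hab : ∀ i, a i ≤ b i)
    (hba : ∀ i, b i < a (i + 1)) : IsClosed (⋃ i, Icc (a i) (b i)) := by
  rw [← isOpen_compl_iff, ha.compl_iUnion_Icc hab hba]
  exact isOpen_iUnion fun _ => isOpen_Ioo

theorem exists_orderIso_image_iUnion_Icc {a b a' b' : ℤ → ℝ} (ha : IsIntervalPartition a)
    (ha' : IsIntervalPartition a') (hab : ∀ i, a i < b i) (hba : ∀ i, b i < a (i + 1))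
    (hab' : ∀ i, a' i < b' i) (hba' : ∀ i, b' i < a' (i + 1)) :
    ∃ φ : ℝ ≃o ℝ, φ '' ⋃ i, Icc (a i) (b i) = ⋃ i, Icc (a' i) (b' i) := by
  choose e he using fun i => exists_orderIso_apply_eq₃ (hab i) (hba i) (hab' i) (hba' i)
  obtain ⟨φ, hφ⟩ := ha.exists_orderIso_eqOn ha' e (fun i => (he i).1) (fun i => (he i).2.2)
  refine ⟨φ, ?_⟩
  rw [image_iUnion]
  refine iUnion_congr fun i => ?_
  have hb : b i ∈ Icc (a i) (a (i + 1)) := ⟨(hab i).le, (hba i).le⟩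
  rw [OrderIso.image_Icc, hφ i ⟨le_rfl, hb.1.trans hb.2⟩, hφ i hb, (he i).1, (he i).2.1]

theorem closure_support_subset_iUnion_Icc {a b : ℤ → ℝ} (ha : IsIntervalPartition a)
    (hab : ∀ i, a i ≤ b i) (hba : ∀ i, b i < a (i + 1)) {g : ℝ → ℝ}
    (hg : ∀ i, ∀ x ∈ Ioo (b i) (a (i + 1)), g x = x) :
    closure {x | g x ≠ x} ⊆ ⋃ i, Icc (a i) (b i) := by
  refine closure_minimal (fun x hx => ?_) (ha.isClosed_iUnion_Icc hab hba)
  by_contra hxU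
  rw [← mem_compl_iff, ha.compl_iUnion_Icc hab hba, mem_iUnion] at hxU
  obtain ⟨i, hi⟩ := hxU
  exact hx (hg i x hi)

end IsIntervalPartition

theorem exists_seq_apply_lt_succ (F : ℕ → ℝ → ℝ) :
    ∃ r : ℕ → ℝ, r 0 = 0 ∧ (∀ k, r k + 1 ≤ r (k + 1)) ∧
      ∀ n k, n ≤ k → F n (r k) < r (k + 1) ∧ F n (-r k) < r (k + 1) := by
  let B : ℕ → ℝ → ℝ := fun k x => ∑ n ∈ Finset.range (k + 1), (|F n x| + |F n (-x)|)
  let r : ℕ → ℝ := fun k => Nat.rec 0 (fun k x => x + 1 + B k x) k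
  have hr : ∀ k, r (k + 1) = r k + 1 + B k (r k) := fun _ => rfl
  have hB : ∀ n k, n ≤ k → |F n (r k)| + |F n (-r k)| ≤ B k (r k) := fun n k hnk =>
    Finset.single_le_sum (f := fun n => |F n (r k)| + |F n (-r k)|) (fun _ _ => by positivity)
      (Finset.mem_range.2 (Nat.lt_succ_of_le hnk))
  have hB_nonneg : ∀ k x, 0 ≤ B k x := fun k x => by positivity
  have hr_nonneg : ∀ k, 0 ≤ r k := fun k => by
    induction k with
    | zero => rfl
    | succ k ih => rw [hr]; linarith [hB_nonneg k (r k)]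
  refine ⟨r, rfl, fun k => by linarith [hr k, hB_nonneg k (r k)], fun n k hnk => ?_⟩
  have := hB n k hnk
  rw [hr]
  constructor <;> linarith [hr_nonneg k, le_abs_self (F n (r k)), le_abs_self (F n (-r k)),
    abs_nonneg (F n (r k)), abs_nonneg (F n (-r k))]

theorem exists_isIntervalPartition_odd_extension {r : ℕ → ℝ} (h0 : r 0 = 0)
    (hr : ∀ k, r k + 1 ≤ r (k + 1)) :
    ∃ c : ℤ → ℝ, IsIntervalPartition c ∧ (∀ k : ℕ, c k = r k) ∧ ∀ k : ℕ, c (-k) = -r k := by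
  have hr_ge : ∀ k : ℕ, (k : ℝ) ≤ r k := by
    intro k
    induction k with
    | zero => simp [h0]
    | succ k ih => push_cast; linarith [hr k]
  let c : ℤ → ℝ := fun l => r l.toNat - r (-l).toNat
  have hc_nat : ∀ k : ℕ, c k = r k := by simp [c, h0]
  have hc_neg : ∀ k : ℕ, c (-k) = -r k := by simp [c, h0]
  refine ⟨c, ⟨strictMono_int_of_lt_succ fun l => ?_, ?_, ?_⟩, hc_nat, hc_neg⟩
  · cases l with
    | ofNat k =>
      have := hr k
      simp only [Int.ofNat_eq_natCast, ← Nat.cast_add_one, hc_nat]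
      linarith
    | negSucc k =>
      have := hr k
      rw [show Int.negSucc k + 1 = -(k : ℤ) by omega, Int.negSucc_eq, ← Nat.cast_add_one,
        hc_neg, hc_neg]
      linarith
  · refine tendsto_atTop_mono' _ ?_ tendsto_intCast_atTop_atTop
    filter_upwards [eventually_ge_atTop 0] with l hl
    lift l to ℕ using hl
    simpa [hc_nat] using hr_ge l
  · refine tendsto_atBot_mono' _ ?_ (tendsto_intCast_atBot_iff.2 tendsto_id)
    filter_upwards [eventually_le_atBot 0] with l hl
    obtain ⟨k, rfl⟩ : ∃ k : ℕ, l = -k := ⟨(-l).toNat, by omega⟩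
    simpa [hc_neg] using hr_ge k

theorem exists_isIntervalPartition_eventually_lt (f : ℕ → ℝ ≃o ℝ) :
    ∃ c : ℤ → ℝ, IsIntervalPartition c ∧
      ∀ n, ∀ᶠ l in cofinite, f n (c l) < c (l + 1) ∧ (f n).symm (c l) < c (l + 1) := by
  obtain ⟨r, h0, hr, hfr⟩ := exists_seq_apply_lt_succ fun n x => |f n x| + |(f n).symm x|
  obtain ⟨c, hc, hc_nat, hc_neg⟩ := exists_isIntervalPartition_odd_extension h0 hr
  refine ⟨c, hc, fun n => ?_⟩
  rw [Int.cofinite_eq, eventually_sup, eventually_atBot, eventually_atTop]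
  constructor
  · refine ⟨-n - 1, fun l hl => ?_⟩
    obtain ⟨k, rfl⟩ : ∃ k : ℕ, l = -((k + 1 : ℕ) : ℤ) := ⟨(-l - 1).toNat, by omega⟩
    rw [show -((k + 1 : ℕ) : ℤ) + 1 = -k by push_cast; ring, hc_neg, hc_neg]
    have h := (hfr n k (by omega)).2
    constructor
    · exact (f n).lt_symm_apply.1
        (by linarith [neg_abs_le ((f n).symm (-r k)), abs_nonneg (f n (-r k))])
    · exact (f n).symm_apply_lt.2
        (by linarith [neg_abs_le (f n (-r k)), abs_nonneg ((f n).symm (-r k))])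
  · refine ⟨n, fun l hl => ?_⟩
    lift l to ℕ using (Int.natCast_nonneg n).trans hl
    rw [← Nat.cast_add_one, hc_nat, hc_nat]
    have h := (hfr n l (by omega)).1
    constructor <;> linarith [le_abs_self (f n (r l)), le_abs_self ((f n).symm (r l)),
      abs_nonneg (f n (r l)), abs_nonneg ((f n).symm (r l))]

section Factorization

variable {c : ℤ → ℝ}

theorem exists_closure_support_subset_apply_symm_eq (hc : IsIntervalPartition c)
    (f : ℝ ≃o ℝ) :
    ∃ H : ℝ ≃o ℝ, closure {x | H x ≠ x} ⊆ ⋃ i : ℤ, Icc (c (6 * i + 3)) (c (6 * i + 7)) ∧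
      ∀ i, f (c (6 * i + 3)) < c (6 * i + 4) → f.symm (c (6 * i + 6)) < c (6 * i + 7) →
        ∀ y ∈ Icc (c (6 * i + 4)) (c (6 * i + 6)), f (H.symm y) = y := by
  have hpiece : ∀ i : ℤ, ∃ e : ℝ ≃o ℝ, (∀ x ∉ Ioo (c (6 * i + 3)) (c (6 * i + 7)), e x = x) ∧
      (f (c (6 * i + 3)) < c (6 * i + 4) → f.symm (c (6 * i + 6)) < c (6 * i + 7) →
        EqOn e f (Icc (f.symm (c (6 * i + 4))) (f.symm (c (6 * i + 6))))) := by
    intro i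
    by_cases hi : f (c (6 * i + 3)) < c (6 * i + 4) ∧ f.symm (c (6 * i + 6)) < c (6 * i + 7)
    · obtain ⟨e, he, hef⟩ := exists_orderIso_eqOn_Icc_eq_self_off_Ioo f
        (f.lt_symm_apply.2 hi.1) (f.symm.monotone (hc.strictMono.monotone (by omega))) hi.2
        (by rw [f.apply_symm_apply]; exact hc.strictMono (by omega))
        (by rw [f.apply_symm_apply]; exact hc.strictMono (by omega))
      exact ⟨e, he, fun _ _ => hef⟩
    · exact ⟨OrderIso.refl ℝ, fun _ _ => rfl, fun h₁ h₂ => absurd ⟨h₁, h₂⟩ hi⟩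
  choose e he hef using hpiece
  have hu : IsIntervalPartition fun i => c (6 * i + 3) :=
    hc.comp (τ := fun i => 6 * i + 3) fun i j h => by dsimp only; omega
  have hc₇ : ∀ i : ℤ, c (6 * i + 3) ≤ c (6 * i + 7) := fun i =>
    hc.strictMono.monotone (by omega)
  have hc₉ : ∀ i : ℤ, c (6 * i + 7) < c (6 * (i + 1) + 3) := fun i => hc.strictMono (by omega)
  obtain ⟨H, hH⟩ := hu.exists_orderIso_eqOn hu e (fun i => he i _ fun h => lt_irrefl _ h.1)
    (fun i => he i _ fun h => (hc₉ i).not_gt h.2)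
  refine ⟨H, hu.closure_support_subset_iUnion_Icc hc₇ hc₉ fun i x hx => ?_,
    fun i h₁ h₂ y hy => ?_⟩
  · rw [hH i ⟨(hc₇ i).trans hx.1.le, hx.2.le⟩, he i x fun h => h.2.not_ge hx.1.le]
  · have hx : f.symm y ∈ Icc (f.symm (c (6 * i + 4))) (f.symm (c (6 * i + 6))) :=
      ⟨f.symm.monotone hy.1, f.symm.monotone hy.2⟩
    have hx' : f.symm y ∈ Icc (c (6 * i + 3)) (c (6 * (i + 1) + 3)) :=
      ⟨(f.lt_symm_apply.2 h₁).le.trans hx.1, hx.2.trans (h₂.trans (hc₉ i)).le⟩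
    have hHy : H (f.symm y) = y := by rw [hH i hx', hef i h₁ h₂ hx, f.apply_symm_apply]
    rw [H.symm_apply_eq.2 hHy.symm, f.apply_symm_apply]

theorem exists_closure_support_subset_eq_off_Icc (hc : IsIntervalPartition c)
    (E : ℝ ≃o ℝ) {N₁ N₂ : ℤ} (hN : N₁ ≤ N₂)
    (hE : ∀ i, i ≤ N₁ ∨ N₂ ≤ i → ∀ y ∈ Icc (c (6 * i + 4)) (c (6 * i + 6)), E y = y) :
    ∃ G : ℝ ≃o ℝ, closure {x | G x ≠ x} ⊆ ⋃ i : ℤ, Icc (c (6 * i)) (c (6 * i + 4)) ∧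
      ∃ a b, ∀ x ∉ Icc a b, G x = E x := by
  have hgap : ∀ i, c (6 * i + 5) ∈ Icc (c (6 * i + 4)) (c (6 * i + 6)) := fun i =>
    ⟨hc.strictMono.monotone (by omega), hc.strictMono.monotone (by omega)⟩
  obtain ⟨G, hGl, hGm, hGr⟩ := E.exists_eq_self_on_Icc (hc.strictMono.monotone (by omega))
    (hE N₁ (Or.inl le_rfl) _ (hgap N₁)) (hE N₂ (Or.inr le_rfl) _ (hgap N₂))
  have hX : IsIntervalPartition fun i => c (6 * i) :=
    hc.comp (τ := fun i => 6 * i) fun i j h => by dsimp only; omega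
  refine ⟨G, hX.closure_support_subset_iUnion_Icc (fun i => hc.strictMono.monotone (by omega))
    (fun i => hc.strictMono (by omega)) fun i x hx => ?_, c (6 * N₁ + 5), c (6 * N₂ + 5),
    fun x hx => ?_⟩
  · have hx' : x ∈ Icc (c (6 * i + 4)) (c (6 * i + 6)) :=
      ⟨hx.1.le, hx.2.le.trans (hc.strictMono.monotone (by omega))⟩
    rcases le_or_gt x (c (6 * N₁ + 5)) with hxq | hqx
    · have := hc.strictMono.lt_iff_lt.1 (hx.1.trans_le hxq)
      rw [hGl x hxq, hE i (Or.inl (by omega)) x hx']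
    rcases le_or_gt (c (6 * N₂ + 5)) x with hpx | hxp
    · have := hc.strictMono.lt_iff_lt.1 (hpx.trans_lt hx.2)
      rw [hGr x hpx, hE i (Or.inr (by omega)) x hx']
    · exact hGm x ⟨hqx.le, hxp.le⟩
  · rw [mem_Icc, not_and_or, not_le, not_le] at hx
    exact hx.elim (fun hx => hGl x hx.le) fun hx => hGr x hx.le

theorem exists_factorization (hc : IsIntervalPartition c) (f : ℝ ≃o ℝ)
    (hf : ∀ᶠ l in cofinite, f (c l) < c (l + 1) ∧ f.symm (c l) < c (l + 1)) :
    ∃ g h k : ℝ ≃o ℝ, (∀ x, f x = g (h (k x))) ∧ IsCompact (closure {x | k x ≠ x}) ∧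
      closure {x | g x ≠ x} ⊆ ⋃ i : ℤ, Icc (c (6 * i)) (c (6 * i + 4)) ∧
      closure {x | h x ≠ x} ⊆ ⋃ i : ℤ, Icc (c (6 * i + 3)) (c (6 * i + 7)) := by
  have hgood : ∀ᶠ i in cofinite,
      f (c (6 * i + 3)) < c (6 * i + 4) ∧ f.symm (c (6 * i + 6)) < c (6 * i + 7) := by
    have h₃ := (Function.Injective.tendsto_cofinite (f := fun i : ℤ => 6 * i + 3)
      fun i j h => by dsimp only at h; omega).eventually hf
    have h₆ := (Function.Injective.tendsto_cofinite (f := fun i : ℤ => 6 * i + 6)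
      fun i j h => by dsimp only at h; omega).eventually hf
    filter_upwards [h₃, h₆] with i h₃ h₆
    simp only [add_assoc, Int.reduceAdd] at h₃ h₆
    exact ⟨h₃.1, h₆.2⟩
  rw [Int.cofinite_eq, eventually_sup, eventually_atBot, eventually_atTop] at hgood
  obtain ⟨⟨N₁, hN₁⟩, N₂, hN₂⟩ := hgood
  obtain ⟨H, hH, hHf⟩ := exists_closure_support_subset_apply_symm_eq hc f
  obtain ⟨G, hG, a, b, hGE⟩ := exists_closure_support_subset_eq_off_Icc hc
    (H.symm.trans f) (min_le_right N₁ N₂) fun i hi => hi.elim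
      (fun hi => (hN₁ i (hi.trans (min_le_left _ _))).elim (hHf i))
      fun hi => (hN₂ i hi).elim (hHf i)
  refine ⟨G, H, (f.trans G.symm).trans H.symm, fun x => by simp, ?_, hG, hH⟩
  refine (isCompact_Icc (a := H.symm a) (b := H.symm b)).closure_of_subset fun x hx => ?_
  by_contra hxI
  apply hx
  have hHx : H x ∉ Icc a b := by rwa [mem_Icc, ← H.symm_apply_le, ← H.le_symm_apply]
  have hGHx : G (H x) = f x := by rw [hGE _ hHx, OrderIso.trans_apply, H.symm_apply_apply]
  rw [OrderIso.trans_apply, OrderIso.trans_apply, ← hGHx, G.symm_apply_apply,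
    H.symm_apply_apply]

end Factorization

/-- factorization lemma for orientation-preserving homeomorphisms of ℝ
(order-isomorphisms `ℝ ≃o ℝ`): given a sequence `f n`, there are sets `X`, `Y`, each the
image of `⋃_{n ∈ ℤ} [3n, 3n+1]` under an orientation-preserving homeomorphism, and
factorizations `f n = g n ∘ h n ∘ k n` with `k n` compactly supported,
`supp (g n) ⊆ X` and `supp (h n) ⊆ Y`. -/
theorem stmt4 (f : ℕ → (ℝ ≃o ℝ)) :
    ∃ X Y : Set ℝ,
      (∃ φ : ℝ ≃o ℝ, X = φ '' (⋃ n : ℤ, Set.Icc (3 * (n : ℝ)) (3 * (n : ℝ) + 1))) ∧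
      (∃ ψ : ℝ ≃o ℝ, Y = ψ '' (⋃ n : ℤ, Set.Icc (3 * (n : ℝ)) (3 * (n : ℝ) + 1))) ∧
      ∀ n : ℕ, ∃ g h k : ℝ ≃o ℝ,
        (∀ x : ℝ, f n x = g (h (k x))) ∧
        IsCompact (closure {x : ℝ | k x ≠ x}) ∧
        closure {x : ℝ | g x ≠ x} ⊆ X ∧
        closure {x : ℝ | h x ≠ x} ⊆ Y := by
  obtain ⟨c, hc, hfc⟩ := exists_isIntervalPartition_eventually_lt f
  have hM : IsIntervalPartition fun i : ℤ => 3 * (i : ℝ) :=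
    ⟨fun i j h => by simpa using h, tendsto_intCast_atTop_atTop.const_mul_atTop three_pos,
      (tendsto_intCast_atBot_iff.2 tendsto_id).const_mul_atBot three_pos⟩
  have hMb : ∀ i : ℤ, 3 * (i : ℝ) + 1 < 3 * ((i + 1 : ℤ) : ℝ) := fun i => by
    push_cast; linarith
  obtain ⟨φ, hφ⟩ := hM.exists_orderIso_image_iUnion_Icc (b' := fun i => c (6 * i + 4))
    (hc.comp (τ := fun i => 6 * i) fun i j h => by dsimp only; omega)
    (fun i => by linarith) hMb
    (fun i => hc.strictMono (by omega)) fun i => hc.strictMono (by omega)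
  obtain ⟨ψ, hψ⟩ := hM.exists_orderIso_image_iUnion_Icc (b' := fun i => c (6 * i + 7))
    (hc.comp (τ := fun i => 6 * i + 3) fun i j h => by dsimp only; omega)
    (fun i => by linarith) hMb
    (fun i => hc.strictMono (by omega)) fun i => hc.strictMono (by omega)
  exact ⟨_, _, ⟨φ, hφ.symm⟩, ⟨ψ, hψ.symm⟩, fun n => exists_factorization hc (f n) (hfc n)⟩
end

section
/- Every strongly distorted group is strongly bounded: if a group G is strongly distorted, then every length function on G is bounded above. -/
/-!
If `ℓ` were unbounded, feed the strong-distortion property a sequence with `ℓ (g n) > w n * n`.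
The resulting finite set `S` has `ℓ`-values at most `M := S.sup ℓ` (also on `S⁻¹`, as `ℓ` is
symmetric), so subadditivity gives `ℓ (g n) ≤ w n * M`, which fails as soon as `n > M`.
-/

/-- A group `G` is strongly distorted if there are `m : ℕ` and `w : ℕ → ℕ` such that for
every sequence `g : ℕ → G` there is a set `S` of cardinality `m` such that each `g n` is a
product of at most `w n` elements of `S ∪ S⁻¹`. -/
def StronglyDistorted (G : Type*) [Group G] : Prop :=
  ∃ (m : ℕ) (w : ℕ → ℕ), ∀ g : ℕ → G, ∃ S : Finset G, S.card = m ∧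
    ∀ n : ℕ, ∃ l : List G, l.length ≤ w n ∧ (∀ x ∈ l, x ∈ S ∨ x⁻¹ ∈ S) ∧ l.prod = g n

section LengthOfWords

variable {G : Type*} (ℓ : G → NNReal)

theorem apply_list_prod_le_sum_map [Monoid G] (h1 : ℓ 1 = 0)
    (htri : ∀ g h : G, ℓ (g * h) ≤ ℓ g + ℓ h) (l : List G) :
    ℓ l.prod ≤ (l.map ℓ).sum := by
  induction l with
  | nil => simp [h1]
  | cons a t ih =>
    calc ℓ (a :: t).prod ≤ ℓ a + ℓ t.prod := htri a t.prod
      _ ≤ ℓ a + (t.map ℓ).sum := by gcongr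
      _ = ((a :: t).map ℓ).sum := by simp

theorem apply_list_prod_le_length_mul_sup [Group G] (h1 : ℓ 1 = 0)
    (hinv : ∀ g : G, ℓ g⁻¹ = ℓ g) (htri : ∀ g h : G, ℓ (g * h) ≤ ℓ g + ℓ h)
    (S : Finset G) (l : List G) (hl : ∀ x ∈ l, x ∈ S ∨ x⁻¹ ∈ S) :
    ℓ l.prod ≤ l.length * S.sup ℓ := by
  have hle : ∀ y ∈ l.map ℓ, y ≤ S.sup ℓ := by
    simp only [List.mem_map, forall_exists_index, and_imp, forall_apply_eq_imp_iff₂]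
    intro x hx
    rcases hl x hx with hS | hS
    · exact Finset.le_sup hS
    · exact hinv x ▸ Finset.le_sup hS
  calc ℓ l.prod ≤ (l.map ℓ).sum := apply_list_prod_le_sum_map ℓ h1 htri l
    _ ≤ (l.map ℓ).length • S.sup ℓ := List.sum_le_card_nsmul _ _ hle
    _ = l.length * S.sup ℓ := by simp

end LengthOfWords

/-- every strongly distorted group is strongly bounded: every length
function is bounded above. -/
theorem stmt7 (G : Type*) [Group G] (hG : StronglyDistorted G) (ℓ : G → NNReal)
    (h1 : ℓ 1 = 0) (hinv : ∀ g : G, ℓ g⁻¹ = ℓ g)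
    (htri : ∀ g h : G, ℓ (g * h) ≤ ℓ g + ℓ h) :
    ∃ C : NNReal, ∀ g : G, ℓ g ≤ C := by
  by_contra! hunbounded
  obtain ⟨m, w, hw⟩ := hG
  choose g hg using fun n : ℕ => hunbounded (w n * n)
  obtain ⟨S, -, hS⟩ := hw g
  obtain ⟨n, hn⟩ := exists_nat_gt (S.sup ℓ)
  obtain ⟨l, hlen, hlS, hprod⟩ := hS n
  have hword := hprod ▸ apply_list_prod_le_length_mul_sup ℓ h1 hinv htri S l hlS
  have hbound : (l.length : NNReal) * S.sup ℓ ≤ w n * n := by gcongr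
  exact (hg n).not_ge (hword.trans hbound)
end

section
/- Let B be a group and N a normal subgroup of B such that N (as a group) has the Schreier property and the quotient group B/N has the Schreier property. Then B has the Schreier property. -/
/-- A group `G` has the Schreier property if every countable subset of `G` is contained
in a finitely generated subgroup of `G`. -/
def SchreierProperty (G : Type*) [Group G] : Prop :=
  ∀ s : Set G, s.Countable → ∃ H : Subgroup G, H.FG ∧ s ⊆ ↑H

/-!
Given a countable `s ⊆ B`, the Schreier property of `B ⧸ N` yields a finitely generated `K ≤ B`
whose image contains the image of `s`, so `s ⊆ K * N`. Writing each `x ∈ s` as `k * n`, the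
countably many `N`-parts lie in a finitely generated subgroup `H` of `N`, and `s ⊆ K ⊔ H`.
-/

namespace Subgroup

variable {G Q : Type*} [Group G] [Group Q]

theorem FG.map {H : Subgroup G} (hH : H.FG) (f : G →* Q) : (H.map f).FG := by
  classical
  obtain ⟨S, rfl⟩ := hH
  exact ⟨S.image f, by rw [Finset.coe_image, MonoidHom.map_closure]⟩

theorem FG.exists_fg_map_eq_of_surjective {H : Subgroup Q} (hH : H.FG) {f : G →* Q}
    (hf : Function.Surjective f) : ∃ K : Subgroup G, K.FG ∧ K.map f = H := by
  classical
  obtain ⟨S, rfl⟩ := hH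
  refine ⟨closure (S.image (Function.surjInv hf)), ⟨_, rfl⟩, ?_⟩
  rw [MonoidHom.map_closure, Finset.coe_image, Set.image_image]
  simp only [Function.surjInv_eq hf, Set.image_id']

end Subgroup

open scoped Pointwise in
theorem Set.Countable.exists_countable_subset_mul {M : Type*} [Mul M] {s K T : Set M}
    (hs : s.Countable) (h : s ⊆ K * T) : ∃ t ⊆ T, t.Countable ∧ s ⊆ K * t := by
  have hdecomp : ∀ x : s, ∃ k ∈ K, ∃ n ∈ T, k * n = x := fun x => h x.2
  choose k hk n hn hkn using hdecomp
  have : Countable s := hs.to_subtype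
  refine ⟨Set.range n, Set.range_subset_iff.2 hn, Set.countable_range n, fun x hx => ?_⟩
  exact ⟨k ⟨x, hx⟩, hk _, n ⟨x, hx⟩, Set.mem_range_self _, hkn _⟩

namespace SchreierProperty

variable {G Q : Type*} [Group G] [Group Q]

theorem exists_fg_subset_of_subset_subgroup {N : Subgroup G} (hN : SchreierProperty N)
    {t : Set G} (ht : t.Countable) (htN : t ⊆ N) : ∃ H : Subgroup G, H.FG ∧ t ⊆ H := by
  obtain ⟨M, hM, htM⟩ := hN ((↑) ⁻¹' t) (ht.preimage Subtype.coe_injective)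
  exact ⟨M.map N.subtype, hM.map _, fun x hx => ⟨⟨x, htN hx⟩, htM hx, rfl⟩⟩

theorem exists_fg_subset_sup_ker (hQ : SchreierProperty Q) {f : G →* Q}
    (hf : Function.Surjective f) {s : Set G} (hs : s.Countable) :
    ∃ K : Subgroup G, K.FG ∧ s ⊆ ↑(K ⊔ f.ker) := by
  obtain ⟨H, hH, hsH⟩ := hQ (f '' s) (hs.image f)
  obtain ⟨K, hK, rfl⟩ := hH.exists_fg_map_eq_of_surjective hf
  refine ⟨K, hK, fun x hx => ?_⟩
  rw [← Subgroup.comap_map_eq]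
  exact hsH ⟨x, hx, rfl⟩

end SchreierProperty

/-- the Schreier property is closed under extensions: if a normal subgroup
`N` of `B` and the quotient `B/N` both have the Schreier property, then so does `B`. -/
theorem stmt11 (B : Type*) [Group B] (N : Subgroup B) [N.Normal]
    (hN : SchreierProperty ↥N) (hQ : SchreierProperty (B ⧸ N)) :
    SchreierProperty B := by
  intro s hs
  obtain ⟨K, hK, hsKN⟩ := hQ.exists_fg_subset_sup_ker (QuotientGroup.mk'_surjective N) hs
  rw [QuotientGroup.ker_mk', Subgroup.mul_normal] at hsKN
  obtain ⟨t, htN, ht, hsKt⟩ := hs.exists_countable_subset_mul hsKN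
  obtain ⟨H, hH, htH⟩ := hN.exists_fg_subset_of_subset_subgroup ht htN
  refine ⟨K ⊔ H, hK.sup hH, hsKt.trans ?_⟩
  exact Subgroup.mul_subset (SetLike.coe_subset_coe.2 le_sup_left)
    (htH.trans (SetLike.coe_subset_coe.2 le_sup_right))
end

section
/- Let B be a group and N a normal subgroup of B such that N (as a group) is strongly distorted and the quotient group B/N is strongly distorted. Then B is strongly distorted. -/
def IsProdOfAtMost {G : Type*} [Group G] (S : Finset G) (k : ℕ) (g : G) : Prop :=
  ∃ l : List G, l.length ≤ k ∧ (∀ x ∈ l, x ∈ S ∨ x⁻¹ ∈ S) ∧ l.prod = g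

namespace IsProdOfAtMost

variable {G H : Type*} [Group G] [Group H] {S T : Finset G} {k k' : ℕ} {g h : G}

theorem mono (hST : S ⊆ T) (hk : k ≤ k') (hg : IsProdOfAtMost S k g) :
    IsProdOfAtMost T k' g := by
  obtain ⟨l, hlen, hmem, rfl⟩ := hg
  exact ⟨l, hlen.trans hk, fun x hx => (hmem x hx).imp (@hST _) (@hST _), rfl⟩

theorem mul (hg : IsProdOfAtMost S k g) (hh : IsProdOfAtMost S k' h) :
    IsProdOfAtMost S (k + k') (g * h) := by
  obtain ⟨l, hlen, hmem, rfl⟩ := hg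
  obtain ⟨l', hlen', hmem', rfl⟩ := hh
  refine ⟨l ++ l', by simp only [List.length_append]; omega, ?_, List.prod_append⟩
  simpa only [List.mem_append, or_imp, forall_and] using ⟨hmem, hmem'⟩

theorem map [DecidableEq H] (f : G →* H) (hg : IsProdOfAtMost S k g) :
    IsProdOfAtMost (S.image f) k (f g) := by
  obtain ⟨l, hlen, hmem, rfl⟩ := hg
  refine ⟨l.map f, by simpa using hlen, ?_, (map_list_prod f l).symm⟩
  simp only [List.mem_map, forall_exists_index, and_imp, forall_apply_eq_imp_iff₂]
  exact fun x hx => (hmem x hx).imp (Finset.mem_image_of_mem f)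
    (fun h => map_inv f x ▸ Finset.mem_image_of_mem f h)

theorem exists_lift [DecidableEq H] {f : G →* H} {y : H}
    (hy : IsProdOfAtMost (T.image f) k y) : ∃ x, f x = y ∧ IsProdOfAtMost T k x := by
  obtain ⟨l, hlen, hmem, rfl⟩ := hy
  have hletter : ∀ z ∈ l, ∃ u, f u = z ∧ (u ∈ T ∨ u⁻¹ ∈ T) := by
    intro z hz
    rcases hmem z hz with h | h
    · obtain ⟨u, hu, rfl⟩ := Finset.mem_image.1 h
      exact ⟨u, rfl, Or.inl hu⟩
    · obtain ⟨u, hu, hfu⟩ := Finset.mem_image.1 h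
      exact ⟨u⁻¹, by rw [map_inv, hfu, inv_inv], Or.inr (by rwa [inv_inv])⟩
  choose! u hfu hu using hletter
  refine ⟨(l.map u).prod, ?_, l.map u, by simpa using hlen, by simpa using hu, rfl⟩
  rw [map_list_prod, List.map_map, List.map_congr_left (f := f ∘ u) (g := id) hfu, List.map_id]

end IsProdOfAtMost

theorem Finset.exists_image_eq_card_le {G H : Type*} [DecidableEq G] [DecidableEq H]
    {f : G → H} (hf : Function.Surjective f) (S : Finset H) :
    ∃ T : Finset G, T.image f = S ∧ T.card ≤ S.card :=
  ⟨S.image (Function.surjInv hf), by simp [Finset.image_image, Function.comp_def,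
    Function.surjInv_eq hf], Finset.card_image_le⟩

theorem stronglyDistorted_of_card_le (G : Type*) [Group G] (m : ℕ) (w : ℕ → ℕ)
    (h : ∀ g : ℕ → G, ∃ S : Finset G, S.card ≤ m ∧ ∀ n, IsProdOfAtMost S (w n) (g n)) :
    StronglyDistorted G := by
  classical
  cases finite_or_infinite G with
  | inl hfin =>
    have : Fintype G := Fintype.ofFinite G
    exact ⟨Fintype.card G, fun _ => 1, fun g => ⟨Finset.univ, Finset.card_univ, fun n =>
      ⟨[g n], by simp, by simp, by simp⟩⟩⟩
  | inr hinf =>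
    refine ⟨m, w, fun g => ?_⟩
    obtain ⟨S, hSm, hS⟩ := h g
    obtain ⟨S', hSS', hS'm⟩ := Infinite.exists_superset_card_eq S m hSm
    exact ⟨S', hS'm, fun n => (hS n).mono hSS' le_rfl⟩

/-- strong distortion is closed under extensions: if a normal subgroup `N`
of `B` and the quotient `B/N` are both strongly distorted, then so is `B`. -/
theorem stmt12 (B : Type*) [Group B] (N : Subgroup B) [N.Normal]
    (hN : StronglyDistorted ↥N) (hQ : StronglyDistorted (B ⧸ N)) :
    StronglyDistorted B := by
  classical
  obtain ⟨mN, wN, hN⟩ := hN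
  obtain ⟨mQ, wQ, hQ⟩ := hQ
  refine stronglyDistorted_of_card_le B (mQ + mN) (fun n => wQ n + wN n) fun g => ?_
  obtain ⟨SQ, hSQ, hgQ⟩ := hQ fun n => QuotientGroup.mk' N (g n)
  obtain ⟨T, rfl, hT⟩ := Finset.exists_image_eq_card_le (QuotientGroup.mk'_surjective N) SQ
  choose x hx hxT using fun n => IsProdOfAtMost.exists_lift (hgQ n)
  have hxN : ∀ n, (x n)⁻¹ * g n ∈ N := fun n => QuotientGroup.eq.1 (hx n)
  obtain ⟨SN, hSN, hgN⟩ := hN fun n => ⟨_, hxN n⟩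
  refine ⟨T ∪ SN.image N.subtype, ?_, fun n => ?_⟩
  · grw [Finset.card_union_le, Finset.card_image_le, hT, hSQ, hSN]
  · rw [← mul_inv_cancel_left (x n) (g n)]
    exact ((hxT n).mono Finset.subset_union_left le_rfl).mul
      ((IsProdOfAtMost.map N.subtype (hgN n)).mono Finset.subset_union_right le_rfl)
end

section
/- Let G be a finite group with more than one element, and let H = ∏_{n∈ℕ} G be the direct product of countably many copies of G (the group of all functions ℕ → G with pointwise multiplication). Then H does not have the Schreier property: there exists a sequence (h_n) of elements of H such that no finitely generated subgroup of H contains every h_n. -/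
/-!
A finitely generated subgroup `⟨S⟩` of `ι → G` is finite: each of its elements `f` depends on
the index `i` only through the profile `(s i)_{s ∈ S}`, which takes values in the finite set
`S → G`. The elements `Pi.mulSingle n g` with `g ≠ 1` are pairwise distinct, so no finite
subgroup contains all of them.
-/

theorem Subgroup.FG.finite_of_pi {ι G : Type*} [Group G] [Finite G]
    {H : Subgroup (ι → G)} (hH : H.FG) : Finite H := by
  obtain ⟨S, rfl⟩ := hH
  let profile : ι → (S → G) := fun i s => (s : ι → G) i
  let φ : ((S → G) → G) →* (ι → G) := MonoidHom.pi fun i => Pi.evalMonoidHom _ (profile i)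
  have hS : (S : Set (ι → G)) ⊆ φ.range := fun s hs => ⟨fun x => x ⟨s, hs⟩, rfl⟩
  have : Finite φ.range := Finite.of_surjective _ φ.rangeRestrict_surjective
  exact Finite.Set.subset _ ((Subgroup.closure_le _).2 hS)

theorem Pi.mulSingle_left_injective {ι M : Type*} [DecidableEq ι] [One M] {x : M} (hx : x ≠ 1) :
    Function.Injective fun i : ι => Pi.mulSingle i x := by
  intro i j hij
  by_contra hne
  exact hx (by simpa [Pi.mulSingle_apply, hne] using congrFun hij i)

/-- for a finite nontrivial group `G`, the countable direct product
`H = ∏_{n ∈ ℕ} G` (all functions `ℕ → G` with pointwise multiplication) does not have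
the Schreier property: there is a sequence of elements of `H` not contained in any
finitely generated subgroup of `H`. -/
theorem stmt14 (G : Type*) [Group G] [Finite G] [Nontrivial G] :
    ∃ h : ℕ → (ℕ → G), ∀ H : Subgroup (ℕ → G), H.FG → ¬ (∀ n : ℕ, h n ∈ H) := by
  obtain ⟨g, hg⟩ := exists_ne (1 : G)
  refine ⟨fun n => Pi.mulSingle n g, fun H hH hmem => ?_⟩
  have : Finite H := hH.finite_of_pi
  exact not_injective_infinite_finite (fun n => (⟨_, hmem n⟩ : H))
    fun m n hmn => Pi.mulSingle_left_injective hg (congrArg Subtype.val hmn)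
end
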